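/- For a decreasing sequence α with α = α'·(l) where l ≥ 2, the set X^k_α equals {x : 0 ≤ x < 2^k and x mod 2^{k−l+1} = revBits_k(min Y^k_α)}, i.e., X^k_α consists exactly of the numbers below 2^k whose k−l+1 least significant bits agree with those of revBits_k(min Y^k_α). -/

import Mathlib

/-- The `k`-bit reversal permutation of `{0,…,2^k−1}`. -/
def revBits (k x : ℕ) : ℕ := ∑ i ∈ Finset.range k, 2 ^ i * (x / 2 ^ (k - 1 - i) % 2)

/-- The sets of time slots `Y^k_α`.  A (decreasing) sequence `α = (l_0,…,l_r)` of the paper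
is represented here as the list `[l_r, …, l_0]`, with the most recently appended level first:
`Y^k_{()} = {0,…,2^k−1}` and `Y^k_{α·(l)} = {y ∈ Y^k_α : ⌈log₂(y − min Y^k_α + 1)⌉ = l}`. -/
noncomputable def Y (k : ℕ) : List ℕ → Finset ℕ
  | [] => Finset.range (2 ^ k)
  | l :: α => (Y k α).filter (fun y => Nat.clog 2 (y - sInf {z : ℕ | z ∈ Y k α} + 1) = l)

/-- Validity of the (reversed) sequence: the paper's `α` is strictly decreasing with
entries in `{0,…,k}`, i.e. the reversed list is strictly increasing with entries `≤ k`. -/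
def ValidSeq (k : ℕ) (α : List ℕ) : Prop :=
  List.Pairwise (· < ·) α ∧ ∀ l ∈ α, l ≤ k

/-- The ranks `X^k_α = revBits_k(Y^k_α)`. -/
noncomputable def X (k : ℕ) (α : List ℕ) : Finset ℕ := (Y k α).image (revBits k)

/-- `step^k_{()} = 1` and `step^k_{α·(l)} = 2^{k−l+1}`. -/
def stepA (k : ℕ) : List ℕ → ℕ
  | [] => 1
  | l :: _ => 2 ^ (k - l + 1)

/-!
If `Y^k_{α'} = [m, m + 2^n)` and `1 ≤ l ≤ n`, the slice of level `l` is `[m + 2^{l-1}, m + 2^l)`,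
so by induction `Y^k_{α'·(l)}` is a block of `2^{l-1}` consecutive numbers starting at a multiple
of `2^{l-1}`. Splitting `k = a + b` with `b = l - 1`, bit reversal satisfies
`revBits_k y = revBits_a ⌊y / 2^b⌋ + 2^a · revBits_b y`. On the block `⌊y / 2^b⌋` is constant,
which fixes the residue mod `2^a`, while `y mod 2^b` runs through `[0, 2^b)`, on which
`revBits_b` is an involution, so the quotient by `2^a` takes every value below `2^b`.
-/

lemma revBits_zero_right (k : ℕ) : revBits k 0 = 0 := by
  simp [revBits]

lemma revBits_one_left (x : ℕ) : revBits 1 x = x % 2 := by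
  simp [revBits]

lemma revBits_add_left (a b x : ℕ) :
    revBits (a + b) x = revBits a (x / 2 ^ b) + 2 ^ a * revBits b x := by
  unfold revBits
  rw [Finset.sum_range_add, Finset.mul_sum]
  congr 1
  · refine Finset.sum_congr rfl fun i hi => ?_
    have hi : i < a := Finset.mem_range.mp hi
    rw [Nat.div_div_eq_div_mul, ← pow_add]
    congr 4
    omega
  · refine Finset.sum_congr rfl fun i hi => ?_
    have hi : i < b := Finset.mem_range.mp hi
    rw [pow_add, mul_assoc]
    congr 5
    omega

lemma revBits_lt (k x : ℕ) : revBits k x < 2 ^ k := by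
  induction k generalizing x with
  | zero => simp [revBits]
  | succ k ih =>
    rw [revBits_add_left, revBits_one_left, pow_one, pow_succ]
    have hhigh := ih (x / 2)
    have hbit : x % 2 ≤ 1 := by omega
    nlinarith

lemma mod_two_pow_div_two_pow_mod_two {x j k : ℕ} (hj : j < k) :
    x % 2 ^ k / 2 ^ j % 2 = x / 2 ^ j % 2 := by
  obtain ⟨d, rfl⟩ : ∃ d, k = j + (d + 1) := ⟨k - j - 1, by omega⟩
  rw [pow_add, Nat.mod_mul_right_div_self, Nat.mod_mod_of_dvd _ (dvd_pow_self 2 (by omega))]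

lemma revBits_mod_two_pow (k x : ℕ) : revBits k (x % 2 ^ k) = revBits k x :=
  Finset.sum_congr rfl fun i hi => by
    rw [mod_two_pow_div_two_pow_mod_two (by have := Finset.mem_range.mp hi; omega)]

lemma revBits_two_pow_mul_add {k r : ℕ} (hr : r < 2 ^ k) (q : ℕ) :
    revBits k (2 ^ k * q + r) = revBits k r := by
  rw [← revBits_mod_two_pow, Nat.mul_add_mod, Nat.mod_eq_of_lt hr]

lemma revBits_two_pow_mul (a b q : ℕ) : revBits (a + b) (2 ^ b * q) = revBits a q := by
  rw [revBits_add_left, ← add_zero (2 ^ b * q), revBits_two_pow_mul_add (Nat.two_pow_pos b),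
    revBits_zero_right, add_zero, Nat.mul_div_cancel_left _ (Nat.two_pow_pos b), mul_zero, add_zero]

lemma revBits_revBits {k x : ℕ} (hx : x < 2 ^ k) : revBits k (revBits k x) = x := by
  induction k generalizing x with
  | zero => simp_all [revBits]
  | succ k ih =>
    have hr : revBits k (x / 2) < 2 ^ k := revBits_lt k _
    have hsplit : revBits (k + 1) x = 2 ^ k * (x % 2) + revBits k (x / 2) := by
      rw [revBits_add_left, revBits_one_left, pow_one, add_comm]
    rw [hsplit, add_comm k 1, revBits_add_left 1 k, revBits_one_left,
      revBits_two_pow_mul_add hr, ih (by omega), Nat.mul_add_div (Nat.two_pow_pos k),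
      Nat.div_eq_of_lt hr, add_zero, Nat.mod_mod, pow_one, Nat.mod_add_div]

lemma image_revBits_Ico {a b k m : ℕ} (hk : a + b = k) (hm : 2 ^ b ∣ m) :
    (Finset.Ico m (m + 2 ^ b)).image (revBits k) =
      (Finset.range (2 ^ k)).filter (fun x => x % 2 ^ a = revBits k m) := by
  subst hk
  obtain ⟨q, rfl⟩ := hm
  have hdiv : ∀ t < 2 ^ b, (2 ^ b * q + t) / 2 ^ b = q := fun t ht => by
    rw [Nat.mul_add_div (Nat.two_pow_pos b), Nat.div_eq_of_lt ht, add_zero]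
  rw [revBits_two_pow_mul]
  ext x
  simp only [Finset.mem_image, Finset.mem_Ico, Finset.mem_filter, Finset.mem_range]
  constructor
  · rintro ⟨y, ⟨hy₁, hy₂⟩, rfl⟩
    obtain ⟨t, ht, rfl⟩ : ∃ t < 2 ^ b, y = 2 ^ b * q + t := ⟨y - 2 ^ b * q, by omega, by omega⟩
    refine ⟨revBits_lt _ _, ?_⟩
    rw [revBits_add_left, hdiv t ht, Nat.add_mul_mod_self_left, Nat.mod_eq_of_lt (revBits_lt a q)]
  · rintro ⟨hx, hxa⟩
    have hs : x / 2 ^ a < 2 ^ b := Nat.div_lt_of_lt_mul (by rwa [← pow_add])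
    have ht := revBits_lt b (x / 2 ^ a)
    refine ⟨2 ^ b * q + revBits b (x / 2 ^ a), ⟨by omega, by omega⟩, ?_⟩
    rw [revBits_add_left, hdiv _ ht, revBits_two_pow_mul_add ht, revBits_revBits hs, ← hxa,
      Nat.mod_add_div]

lemma clog_two_add_one_eq_succ_iff (d j : ℕ) :
    Nat.clog 2 (d + 1) = j + 1 ↔ 2 ^ j ≤ d ∧ d < 2 ^ (j + 1) := by
  rw [le_antisymm_iff, Nat.clog_le_iff_le_pow one_lt_two, Nat.add_one_le_iff (m := Nat.clog 2 _),
    Nat.lt_clog_iff_pow_lt one_lt_two]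
  omega

lemma sInf_setOf_mem_Ico {m n : ℕ} (h : m < n) : sInf {z : ℕ | z ∈ Finset.Ico m n} = m :=
  (congrArg sInf (Finset.coe_Ico m n)).trans (csInf_Ico h)

lemma Y_cons_eq_Ico_of_eq_Ico {k m n j : ℕ} {α : List ℕ} (hY : Y k α = Finset.Ico m (m + 2 ^ n))
    (hj : j < n) : Y k ((j + 1) :: α) = Finset.Ico (m + 2 ^ j) (m + 2 ^ j + 2 ^ j) := by
  have hinf : sInf {z : ℕ | z ∈ Y k α} = m := by
    rw [hY]; exact sInf_setOf_mem_Ico (Nat.lt_add_of_pos_right (Nat.two_pow_pos n))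
  have hpow : 2 ^ (j + 1) ≤ 2 ^ n := Nat.pow_le_pow_right two_pos hj
  ext y
  rw [Y, Finset.mem_filter, hinf, hY, Finset.mem_Ico, Finset.mem_Ico]
  constructor
  · rintro ⟨hy, hlog⟩
    rw [clog_two_add_one_eq_succ_iff, pow_succ] at hlog
    omega
  · intro hy
    rw [clog_two_add_one_eq_succ_iff, pow_succ]
    omega

lemma ValidSeq.of_cons {k l : ℕ} {α : List ℕ} (h : ValidSeq k (l :: α)) : ValidSeq k α :=
  ⟨h.1.of_cons, fun x hx => h.2 x (List.mem_cons_of_mem l hx)⟩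

lemma Y_cons_eq_Ico {k : ℕ} {α : List ℕ} {j : ℕ} (h : ValidSeq k ((j + 1) :: α)) :
    ∃ m, 2 ^ j ∣ m ∧ Y k ((j + 1) :: α) = Finset.Ico m (m + 2 ^ j) := by
  induction α generalizing j with
  | nil =>
    have hY : Y k [] = Finset.Ico 0 (0 + 2 ^ k) := by rw [zero_add]; exact Finset.range_eq_Ico _
    have hjk : j < k := h.2 _ List.mem_cons_self
    exact ⟨0 + 2 ^ j, dvd_add (dvd_zero _) dvd_rfl, Y_cons_eq_Ico_of_eq_Ico hY hjk⟩
  | cons l β ih =>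
    have hjl : j + 1 < l := List.rel_of_pairwise_cons h.1 List.mem_cons_self
    obtain ⟨i, rfl⟩ : ∃ i, l = i + 1 := ⟨l - 1, by omega⟩
    obtain ⟨m, hm, hY⟩ := ih h.of_cons
    have hji : 2 ^ j ∣ 2 ^ i := Nat.pow_dvd_pow 2 (by omega)
    exact ⟨m + 2 ^ j, dvd_add (hji.trans hm) dvd_rfl, Y_cons_eq_Ico_of_eq_Ico hY (by omega)⟩

/-- For `α = α'·(l)` with `l ≥ 2`, `X^k_α` consists exactly of the numbers below `2^k`
whose `k−l+1` least significant bits agree with `revBits_k(min Y^k_α)`. -/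
theorem X_residue_class (k : ℕ) (α : List ℕ) (l : ℕ) (h : ValidSeq k (l :: α)) (hl : 2 ≤ l) :
    X k (l :: α) = (Finset.range (2 ^ k)).filter
      (fun x => x % 2 ^ (k - l + 1) = revBits k (sInf {y : ℕ | y ∈ Y k (l :: α)})) := by
  obtain ⟨j, rfl⟩ : ∃ j, l = j + 1 := ⟨l - 1, by omega⟩
  have hjk : j + 1 ≤ k := h.2 _ List.mem_cons_self
  obtain ⟨m, hm, hY⟩ := Y_cons_eq_Ico h
  rw [X, hY, sInf_setOf_mem_Ico (Nat.lt_add_of_pos_right (Nat.two_pow_pos j))]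
  exact image_revBits_Ico (by omega) hm
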